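/- Fix integers n, m ≥ 1, T ≥ 1, T₀ ≥ 0, indices i, j ∈ {1,…,n}, matrices A ∈ ℝ^{n×n}, B ∈ ℝ^{n×m}, K₀ ∈ ℝ^{m×n}, and constants η > 0, C ≥ 1, 0 ≤ ρ < 1 such that |||(A+BK₀)^τ||| ≤ Cρ^τ and |||(A+BK₀)^τB||| ≤ Cρ^τ for all integers τ ≥ 0 (spectral norm). Define the symmetric matrix R_G ∈ ℝ^{(n+m)(T+T₀+1)×(n+m)(T+T₀+1)} in block form as R_G = [[ η²·R̃₁(τ ↦ [(A+BK₀)^τ]_{i→j}), (η²/2)·R₁(τ ↦ [(A+BK₀)^τB]_{i→j}) ], [ (η²/2)·R₁(τ ↦ [(A+BK₀)^τB]_{i→j})ᵀ, 0 ]]. Then every eigenvalue λ of R_G satisfies |λ| ≤ (3/2)·Cη²/(1−ρ), and the sum of the squares of the eigenvalues of R_G satisfies Σ_k λ_k² ≤ (9/2)·C²η⁴·T/(1−ρ)². -/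

import Mathlib

open Matrix

noncomputable section

/-- The spectral norm (induced 2-norm) of a real matrix. -/
def specNorm {α β : Type*} [Fintype α] [Fintype β] [DecidableEq β]
    (M : Matrix α β ℝ) : ℝ :=
  ‖LinearMap.toContinuousLinearMap (Matrix.toEuclideanLin M)‖

/-- The block-Toeplitz matrix `R₁(X)`: the `(r,s)` block equals `X(r-1-s)` when
`r ≥ T₀+1` and `s ≤ r-1`, and is zero otherwise. -/
def R1 {p q : ℕ} (T T₀ : ℕ) (f : ℕ → Matrix (Fin p) (Fin q) ℝ) :
    Matrix (Fin (T + T₀ + 1) × Fin p) (Fin (T + T₀ + 1) × Fin q) ℝ :=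
  Matrix.of fun rp sq =>
    if T₀ + 1 ≤ (rp.1 : ℕ) ∧ (sq.1 : ℕ) < (rp.1 : ℕ)
    then f ((rp.1 : ℕ) - 1 - (sq.1 : ℕ)) rp.2 sq.2 else 0

/-- The symmetrization `R̃₁(X) = (R₁(X) + R₁(X)ᵀ)/2`. -/
def R1sym {p : ℕ} (T T₀ : ℕ) (f : ℕ → Matrix (Fin p) (Fin p) ℝ) :
    Matrix (Fin (T + T₀ + 1) × Fin p) (Fin (T + T₀ + 1) × Fin p) ℝ :=
  (2 : ℝ)⁻¹ • (R1 T T₀ f + (R1 T T₀ f)ᵀ)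

/-- `[N]_{i→j}`: the matrix with `n` rows all zero except the `j`-th row, which is the
`i`-th row of `N`. -/
def rowEmbed {a q : ℕ} (n : ℕ) (N : Matrix (Fin a) (Fin q) ℝ) (i : Fin a) (j : Fin n) :
    Matrix (Fin n) (Fin q) ℝ :=
  Matrix.of fun r c => if r = j then N i c else 0

end

/-!
Every eigenvalue is bounded by the spectral norm. The matrix `R₁(X)` is the sum over the lags
`τ` of block matrices carrying one copy of `X(τ)` in each block row and column, and such a matrix
has the spectral norm of `X(τ)`; hence `|||R₁(X)||| ≤ ∑ Cρ^τ ≤ C/(1-ρ)`. A block matrix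
`[[P, Q], [Qᵀ, 0]]` has norm at most `|||P||| + |||Q|||`, which gives `(1 + 1/2)·Cη²/(1-ρ)`.

The squares of the eigenvalues of a symmetric matrix sum to its squared Frobenius norm. Block row
`r ≥ T₀+1` of `R₁(X)` holds `X(0), …, X(r-1)`; the squared Frobenius norm of `[N]_{i→j}` is that
of a row of `N`, at most `|||N|||²`, so each of these `T` block rows contributes at most
`C²/(1-ρ²) ≤ C²/(1-ρ)²`.
-/

section SpecNorm

open scoped Matrix.Norms.L2Operator

variable {α β : Type*} [Fintype α] [Fintype β] [DecidableEq β]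

theorem specNorm_eq_l2_opNorm (M : Matrix α β ℝ) : specNorm M = ‖M‖ := rfl

theorem specNorm_nonneg (M : Matrix α β ℝ) : 0 ≤ specNorm M := norm_nonneg _

theorem specNorm_transpose [DecidableEq α] (M : Matrix α β ℝ) : specNorm Mᵀ = specNorm M := by
  simpa [specNorm_eq_l2_opNorm] using l2_opNorm_conjTranspose M

theorem sum_sq_mulVec_le (M : Matrix α β ℝ) (x : β → ℝ) :
    ∑ a, (M *ᵥ x) a ^ 2 ≤ specNorm M ^ 2 * ∑ b, x b ^ 2 := by
  have h := l2_opNorm_mulVec M (WithLp.toLp 2 x)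
  have h2 := pow_le_pow_left₀ (norm_nonneg _) h 2
  rw [mul_pow, EuclideanSpace.real_norm_sq_eq, EuclideanSpace.real_norm_sq_eq] at h2
  simpa [specNorm_eq_l2_opNorm] using h2

theorem specNorm_le_of_sum_sq_mulVec_le {M : Matrix α β ℝ} {c : ℝ} (hc : 0 ≤ c)
    (h : ∀ x : β → ℝ, ∑ a, (M *ᵥ x) a ^ 2 ≤ c ^ 2 * ∑ b, x b ^ 2) :
    specNorm M ≤ c := by
  refine ContinuousLinearMap.opNorm_le_bound _ hc fun x => ?_
  rw [← sq_le_sq₀ (norm_nonneg _) (by positivity), mul_pow, EuclideanSpace.real_norm_sq_eq,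
    EuclideanSpace.real_norm_sq_eq]
  exact h x

theorem abs_le_specNorm_of_mem_spectrum [DecidableEq α] {M : Matrix α α ℝ} {r : ℝ}
    (hr : r ∈ spectrum ℝ M) : |r| ≤ specNorm M := by
  have h := spectrum.norm_le_norm_mul_of_mem hr
  have h1 : ‖(1 : Matrix α α ℝ)‖ ≤ 1 := by
    rw [← l2_opNorm_toEuclideanCLM, map_one]
    exact ContinuousLinearMap.norm_id_le
  rw [Real.norm_eq_abs] at h
  rw [specNorm_eq_l2_opNorm]
  nlinarith [norm_nonneg M]

theorem specNorm_smul (c : ℝ) (M : Matrix α β ℝ) : specNorm (c • M) = |c| * specNorm M := by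
  simp only [specNorm_eq_l2_opNorm, norm_smul, Real.norm_eq_abs]

@[simp]
theorem specNorm_zero : specNorm (0 : Matrix α β ℝ) = 0 := by
  rw [specNorm_eq_l2_opNorm, norm_zero]

theorem specNorm_add_le (M N : Matrix α β ℝ) : specNorm (M + N) ≤ specNorm M + specNorm N :=
  norm_add_le M N

theorem specNorm_sum_le {ι : Type*} (s : Finset ι) (M : ι → Matrix α β ℝ) :
    specNorm (∑ t ∈ s, M t) ≤ ∑ t ∈ s, specNorm (M t) := by
  simpa only [specNorm_eq_l2_opNorm] using norm_sum_le s M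

theorem specNorm_half_add_transpose_le [DecidableEq α] (X : Matrix α α ℝ) :
    specNorm ((2 : ℝ)⁻¹ • (X + Xᵀ)) ≤ specNorm X := by
  have h := specNorm_add_le X Xᵀ
  rw [specNorm_smul, specNorm_transpose] at *
  rw [abs_of_pos (by norm_num)]
  linarith

theorem sum_sq_row_le [DecidableEq α] (N : Matrix α β ℝ) (i : α) :
    ∑ b, N i b ^ 2 ≤ specNorm N ^ 2 := by
  simpa [mulVec_single_one, specNorm_transpose, Pi.single_apply] using
    sum_sq_mulVec_le Nᵀ (Pi.single i 1)

end SpecNorm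

section BlockShift

variable {ι κ α β : Type*}

-- A block matrix with at most one copy of `N` in each block row and column: `R1` is a sum of
-- these, one for each lag.
def blockShift (v : ι → Prop) [DecidablePred v] [DecidableEq κ] (σ : ι → κ)
    (N : Matrix α β ℝ) : Matrix (ι × α) (κ × β) ℝ :=
  Matrix.of fun ra sb => if v ra.1 ∧ sb.1 = σ ra.1 then N ra.2 sb.2 else 0

variable (v : ι → Prop) [DecidablePred v] [DecidableEq κ] (σ : ι → κ) (N : Matrix α β ℝ)

theorem blockShift_mulVec [Fintype κ] [Fintype β] (x : κ × β → ℝ) (r : ι) (a : α) :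
    (blockShift v σ N *ᵥ x) (r, a) = if v r then (N *ᵥ fun b => x (σ r, b)) a else 0 := by
  simp only [mulVec, dotProduct, blockShift, of_apply, Fintype.sum_prod_type]
  split_ifs with hv
  · rw [Finset.sum_eq_single (σ r) (fun s _ hs => by simp [hs]) (by simp)]
    simp [hv]
  · simp [hv]

theorem specNorm_blockShift_le [Fintype ι] [Fintype κ] [Fintype α] [Fintype β] [DecidableEq β]
    (hσ : Set.InjOn σ {r | v r}) :
    specNorm (blockShift v σ N) ≤ specNorm N := by
  refine specNorm_le_of_sum_sq_mulVec_le (specNorm_nonneg N) fun x => ?_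
  let xs : κ → ℝ := fun s => ∑ b, x (s, b) ^ 2
  calc ∑ ra, (blockShift v σ N *ᵥ x) ra ^ 2
      = ∑ r ∈ Finset.univ.filter v, ∑ a, (N *ᵥ fun b => x (σ r, b)) a ^ 2 := by
        rw [Fintype.sum_prod_type, Finset.sum_filter]
        refine Finset.sum_congr rfl fun r _ => ?_
        split_ifs with hv <;> simp [blockShift_mulVec, hv]
    _ ≤ ∑ r ∈ Finset.univ.filter v, specNorm N ^ 2 * xs (σ r) :=
        Finset.sum_le_sum fun r _ => sum_sq_mulVec_le N _
    _ = specNorm N ^ 2 * ∑ s ∈ (Finset.univ.filter v).image σ, xs s := by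
        rw [Finset.sum_image fun r hr r' hr' => hσ (by simpa using hr) (by simpa using hr'),
          Finset.mul_sum]
    _ ≤ specNorm N ^ 2 * ∑ s, xs s :=
        mul_le_mul_of_nonneg_left (Finset.sum_le_sum_of_subset_of_nonneg (Finset.subset_univ _)
          fun s _ _ => Finset.sum_nonneg fun b _ => sq_nonneg _) (sq_nonneg _)
    _ = specNorm N ^ 2 * ∑ sb, x sb ^ 2 := by rw [Fintype.sum_prod_type]

end BlockShift

section Blocks

variable {α β γ δ : Type*} [Fintype α] [Fintype β] [Fintype γ] [Fintype δ]
  [DecidableEq γ] [DecidableEq δ]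

theorem specNorm_fromBlocks_diagonal_le (P : Matrix α γ ℝ) (S : Matrix β δ ℝ) :
    specNorm (fromBlocks P 0 0 S) ≤ max (specNorm P) (specNorm S) := by
  refine specNorm_le_of_sum_sq_mulVec_le (le_max_of_le_left (specNorm_nonneg _)) fun x => ?_
  have hP := sum_sq_mulVec_le P (x ∘ Sum.inl)
  have hS := sum_sq_mulVec_le S (x ∘ Sum.inr)
  have hPm := pow_le_pow_left₀ (specNorm_nonneg _) (le_max_left (specNorm P) (specNorm S)) 2
  have hSm := pow_le_pow_left₀ (specNorm_nonneg _) (le_max_right (specNorm P) (specNorm S)) 2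
  simp only [fromBlocks_mulVec, Fintype.sum_sum_type, Sum.elim_inl, Sum.elim_inr, zero_mulVec,
    add_zero, zero_add, Function.comp_def] at hP hS ⊢
  nlinarith [Finset.sum_nonneg fun c (_ : c ∈ Finset.univ) => sq_nonneg (x (Sum.inl c)),
    Finset.sum_nonneg fun d (_ : d ∈ Finset.univ) => sq_nonneg (x (Sum.inr d))]

theorem specNorm_fromBlocks_antidiagonal_le (Q : Matrix α δ ℝ) (R : Matrix β γ ℝ) :
    specNorm (fromBlocks 0 Q R 0) ≤ max (specNorm Q) (specNorm R) := by
  refine specNorm_le_of_sum_sq_mulVec_le (le_max_of_le_left (specNorm_nonneg _)) fun x => ?_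
  have hQ := sum_sq_mulVec_le Q (x ∘ Sum.inr)
  have hR := sum_sq_mulVec_le R (x ∘ Sum.inl)
  have hQm := pow_le_pow_left₀ (specNorm_nonneg _) (le_max_left (specNorm Q) (specNorm R)) 2
  have hRm := pow_le_pow_left₀ (specNorm_nonneg _) (le_max_right (specNorm Q) (specNorm R)) 2
  simp only [fromBlocks_mulVec, Fintype.sum_sum_type, Sum.elim_inl, Sum.elim_inr, zero_mulVec,
    add_zero, zero_add, Function.comp_def] at hQ hR ⊢
  nlinarith [Finset.sum_nonneg fun c (_ : c ∈ Finset.univ) => sq_nonneg (x (Sum.inl c)),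
    Finset.sum_nonneg fun d (_ : d ∈ Finset.univ) => sq_nonneg (x (Sum.inr d))]

theorem specNorm_fromBlocks_zero₂₂_le (P : Matrix α γ ℝ) (Q : Matrix α δ ℝ)
    (R : Matrix β γ ℝ) :
    specNorm (fromBlocks P Q R (0 : Matrix β δ ℝ)) ≤
      specNorm P + max (specNorm Q) (specNorm R) := by
  have hsplit : fromBlocks P Q R (0 : Matrix β δ ℝ) = fromBlocks P 0 0 0 + fromBlocks 0 Q R 0 := by
    simp [fromBlocks_add]
  have hP := specNorm_fromBlocks_diagonal_le P (0 : Matrix β δ ℝ)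
  rw [specNorm_zero, max_eq_left (specNorm_nonneg P)] at hP
  rw [hsplit]
  exact (specNorm_add_le _ _).trans (add_le_add hP (specNorm_fromBlocks_antidiagonal_le Q R))

end Blocks

theorem sum_range_mul_pow_le {c q : ℝ} (hc : 0 ≤ c) (hq0 : 0 ≤ q) (hq1 : q < 1) (L : ℕ) :
    ∑ τ ∈ Finset.range L, c * q ^ τ ≤ c / (1 - q) := by
  have h := geom_sum_Ico_le_of_lt_one (m := 0) (n := L) hq0 hq1
  rw [← Finset.range_eq_Ico, pow_zero] at h
  calc ∑ τ ∈ Finset.range L, c * q ^ τ = c * ∑ τ ∈ Finset.range L, q ^ τ := (Finset.mul_sum ..).symm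
    _ ≤ c * (1 / (1 - q)) := mul_le_mul_of_nonneg_left h hc
    _ = c / (1 - q) := mul_one_div c _

section R1

variable {p q : ℕ} (T T₀ : ℕ)

def R1Term (τ : ℕ) (N : Matrix (Fin p) (Fin q) ℝ) :
    Matrix (Fin (T + T₀ + 1) × Fin p) (Fin (T + T₀ + 1) × Fin q) ℝ :=
  blockShift (fun r : Fin (T + T₀ + 1) => T₀ + 1 ≤ (r : ℕ) ∧ τ < r)
    (fun r => ⟨r - 1 - τ, by have := r.isLt; omega⟩) N

theorem R1_eq_sum_R1Term (f : ℕ → Matrix (Fin p) (Fin q) ℝ) :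
    R1 T T₀ f = ∑ τ ∈ Finset.range (T + T₀ + 1), R1Term T T₀ τ (f τ) := by
  ext ⟨r, a⟩ ⟨s, b⟩
  have hr := r.isLt
  have hcond : ∀ τ : ℕ, (T₀ + 1 ≤ (r : ℕ) ∧ τ < r) ∧ s = ⟨r - 1 - τ, by omega⟩ ↔
      (T₀ + 1 ≤ (r : ℕ) ∧ (s : ℕ) < r) ∧ (r : ℕ) - 1 - s = τ := by
    intro τ
    simp only [Fin.ext_iff]
    omega
  simp only [R1, R1Term, blockShift, Matrix.sum_apply, of_apply, hcond]
  simp only [ite_and]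
  split_ifs
  · rw [Finset.sum_ite_eq, if_pos (Finset.mem_range.mpr (by omega))]
  all_goals simp

variable {T T₀}

theorem specNorm_R1Term_le (τ : ℕ) (N : Matrix (Fin p) (Fin q) ℝ) :
    specNorm (R1Term T T₀ τ N) ≤ specNorm N :=
  specNorm_blockShift_le _ _ N fun r hr r' hr' h => by
    simp only [Set.mem_ofPred_eq, Fin.mk.injEq] at hr hr' h
    omega

theorem specNorm_R1_le {f : ℕ → Matrix (Fin p) (Fin q) ℝ} {c ρ : ℝ} (hc : 0 ≤ c)
    (hρ0 : 0 ≤ ρ) (hρ1 : ρ < 1) (hf : ∀ τ, specNorm (f τ) ≤ c * ρ ^ τ) :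
    specNorm (R1 T T₀ f) ≤ c / (1 - ρ) := by
  rw [R1_eq_sum_R1Term]
  refine (specNorm_sum_le _ _).trans <| le_trans ?_ (sum_range_mul_pow_le hc hρ0 hρ1 (T + T₀ + 1))
  exact Finset.sum_le_sum fun τ _ => (specNorm_R1Term_le τ (f τ)).trans (hf τ)

end R1

section RowEmbed

variable {a q n : ℕ} (N : Matrix (Fin a) (Fin q) ℝ) (i : Fin a) (j : Fin n)

theorem rowEmbed_mulVec (x : Fin q → ℝ) (r : Fin n) :
    (rowEmbed n N i j *ᵥ x) r = if r = j then (N *ᵥ x) i else 0 := by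
  by_cases hr : r = j <;> simp [rowEmbed, mulVec, dotProduct, hr]

theorem specNorm_rowEmbed_le : specNorm (rowEmbed n N i j) ≤ specNorm N := by
  refine specNorm_le_of_sum_sq_mulVec_le (specNorm_nonneg N) fun x => ?_
  calc ∑ r, (rowEmbed n N i j *ᵥ x) r ^ 2 = (N *ᵥ x) i ^ 2 := by
        simp [rowEmbed_mulVec, ite_pow]
    _ ≤ ∑ a', (N *ᵥ x) a' ^ 2 :=
        Finset.single_le_sum (fun _ _ => sq_nonneg _) (Finset.mem_univ i)
    _ ≤ specNorm N ^ 2 * ∑ b, x b ^ 2 := sum_sq_mulVec_le N x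

end RowEmbed

section Frobenius

variable {α β γ δ : Type*} [Fintype α] [Fintype β] [Fintype γ] [Fintype δ]

def frobeniusSq (M : Matrix α β ℝ) : ℝ := ∑ a, ∑ b, M a b ^ 2

@[simp]
theorem frobeniusSq_zero : frobeniusSq (0 : Matrix α β ℝ) = 0 := by
  simp [frobeniusSq]

theorem frobeniusSq_smul (c : ℝ) (M : Matrix α β ℝ) :
    frobeniusSq (c • M) = c ^ 2 * frobeniusSq M := by
  simp only [frobeniusSq, Matrix.smul_apply, smul_eq_mul, mul_pow, Finset.mul_sum]

theorem frobeniusSq_transpose (M : Matrix α β ℝ) : frobeniusSq Mᵀ = frobeniusSq M :=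
  Finset.sum_comm

theorem frobeniusSq_fromBlocks (P : Matrix α γ ℝ) (Q : Matrix α δ ℝ) (R : Matrix β γ ℝ)
    (S : Matrix β δ ℝ) :
    frobeniusSq (fromBlocks P Q R S) =
      frobeniusSq P + frobeniusSq Q + frobeniusSq R + frobeniusSq S := by
  simp only [frobeniusSq, Fintype.sum_sum_type, fromBlocks_apply₁₁, fromBlocks_apply₁₂,
    fromBlocks_apply₂₁, fromBlocks_apply₂₂, Finset.sum_add_distrib]
  ring

theorem frobeniusSq_half_add_transpose_le (X : Matrix α α ℝ) :
    frobeniusSq ((2 : ℝ)⁻¹ • (X + Xᵀ)) ≤ frobeniusSq X := by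
  have hpt : ∀ a b, ((2 : ℝ)⁻¹ • (X + Xᵀ)) a b ^ 2 ≤ (X a b ^ 2 + Xᵀ a b ^ 2) / 2 := by
    intro a b
    simp only [Matrix.smul_apply, Matrix.add_apply, transpose_apply, smul_eq_mul]
    nlinarith [sq_nonneg (X a b - X b a)]
  calc frobeniusSq ((2 : ℝ)⁻¹ • (X + Xᵀ))
      ≤ (frobeniusSq X + frobeniusSq Xᵀ) / 2 := by
        simp only [frobeniusSq, ← Finset.sum_add_distrib, Finset.sum_div]
        exact Finset.sum_le_sum fun a _ => Finset.sum_le_sum fun b _ => hpt a b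
    _ = frobeniusSq X := by rw [frobeniusSq_transpose]; ring

theorem sum_sq_eigenvalues_eq_frobeniusSq [DecidableEq α] {M : Matrix α α ℝ}
    (hM : M.IsHermitian) : ∑ k, hM.eigenvalues k ^ 2 = frobeniusSq M := by
  set U : Matrix α α ℝ := (hM.eigenvectorUnitary : Matrix α α ℝ)
  set D : Matrix α α ℝ := diagonal (RCLike.ofReal ∘ hM.eigenvalues)
  have hU : star U * U = 1 := mem_unitaryGroup_iff'.mp hM.eigenvectorUnitary.2
  have hMM : M * M = U * (D * D) * star U := by
    rw [hM.spectral_theorem]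
    calc U * D * star U * (U * D * star U) = U * (D * ((star U * U) * D)) * star U := by
          noncomm_ring
      _ = U * (D * D) * star U := by rw [hU, one_mul]
  have htrace : (M * M).trace = ∑ k, hM.eigenvalues k ^ 2 := by
    rw [hMM, trace_mul_cycle, ← Matrix.mul_assoc, hU, Matrix.one_mul, diagonal_mul_diagonal,
      trace_diagonal]
    simp [sq]
  have hsymm : ∀ a b, M b a = M a b := fun a b => by
    simpa using congr_fun (congr_fun hM a) b
  rw [← htrace, frobeniusSq, trace]
  refine Finset.sum_congr rfl fun a _ => ?_
  rw [diag_apply, mul_apply]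
  exact Finset.sum_congr rfl fun b _ => by rw [hsymm a b, sq]

end Frobenius

theorem frobeniusSq_rowEmbed {a q n : ℕ} (N : Matrix (Fin a) (Fin q) ℝ) (i : Fin a)
    (j : Fin n) : frobeniusSq (rowEmbed n N i j) = ∑ c, N i c ^ 2 := by
  simp [frobeniusSq, rowEmbed, ite_pow]

theorem frobeniusSq_rowEmbed_le {a q n : ℕ} (N : Matrix (Fin a) (Fin q) ℝ) (i : Fin a)
    (j : Fin n) : frobeniusSq (rowEmbed n N i j) ≤ specNorm N ^ 2 :=
  (frobeniusSq_rowEmbed N i j).trans_le (sum_sq_row_le N i)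

section R1Frobenius

variable {p q : ℕ} {T T₀ : ℕ}

theorem sum_sq_blockRow_R1 (f : ℕ → Matrix (Fin p) (Fin q) ℝ) (r : Fin (T + T₀ + 1)) :
    ∑ s : Fin (T + T₀ + 1), ∑ a, ∑ b, R1 T T₀ f (r, a) (s, b) ^ 2 =
      if T₀ + 1 ≤ (r : ℕ) then ∑ τ ∈ Finset.range r, frobeniusSq (f τ) else 0 := by
  split_ifs with hr
  · have hfilter : (Finset.range (T + T₀ + 1)).filter (· < (r : ℕ)) = Finset.range r := by
      ext s
      simp only [Finset.mem_filter, Finset.mem_range]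
      omega
    simp only [R1, of_apply, hr, true_and, ite_pow, ne_eq, OfNat.ofNat_ne_zero,
      not_false_eq_true, zero_pow, Finset.sum_const_zero, Finset.sum_ite_irrel]
    refine (Fin.sum_univ_eq_sum_range
      (fun s => if s < (r : ℕ) then frobeniusSq (f (r - 1 - s)) else 0) _).trans ?_
    rw [← Finset.sum_filter, hfilter, ← Finset.sum_range_reflect]
    refine Finset.sum_congr rfl fun τ hτ => ?_
    rw [Finset.mem_range] at hτ
    congr 2
    omega
  · simp [R1, show ¬T₀ < (r : ℕ) by omega]

theorem frobeniusSq_R1 (f : ℕ → Matrix (Fin p) (Fin q) ℝ) :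
    frobeniusSq (R1 T T₀ f) =
      ∑ r ∈ Finset.Ico (T₀ + 1) (T + T₀ + 1), ∑ τ ∈ Finset.range r, frobeniusSq (f τ) := by
  have hIco :
      (Finset.range (T + T₀ + 1)).filter (T₀ + 1 ≤ ·) = Finset.Ico (T₀ + 1) (T + T₀ + 1) := by
    ext r
    simp only [Finset.mem_filter, Finset.mem_range, Finset.mem_Ico]
    omega
  calc frobeniusSq (R1 T T₀ f)
      = ∑ r : Fin (T + T₀ + 1), ∑ s : Fin (T + T₀ + 1), ∑ a, ∑ b, R1 T T₀ f (r, a) (s, b) ^ 2 := by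
        simp only [frobeniusSq, Fintype.sum_prod_type]
        exact Finset.sum_congr rfl fun r _ => Finset.sum_comm
    _ = ∑ r ∈ Finset.range (T + T₀ + 1),
          if T₀ + 1 ≤ r then ∑ τ ∈ Finset.range r, frobeniusSq (f τ) else 0 := by
        simp only [sum_sq_blockRow_R1]
        exact Fin.sum_univ_eq_sum_range
          (fun r => if T₀ + 1 ≤ r then ∑ τ ∈ Finset.range r, frobeniusSq (f τ) else 0) _
    _ = _ := by rw [← Finset.sum_filter, hIco]

theorem frobeniusSq_R1_le {f : ℕ → Matrix (Fin p) (Fin q) ℝ} {c ρ : ℝ} (hc : 0 ≤ c)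
    (hρ0 : 0 ≤ ρ) (hρ1 : ρ < 1) (hf : ∀ τ, frobeniusSq (f τ) ≤ c * ρ ^ τ) :
    frobeniusSq (R1 T T₀ f) ≤ T * (c / (1 - ρ)) := by
  rw [frobeniusSq_R1]
  calc _ ≤ ∑ _r ∈ Finset.Ico (T₀ + 1) (T + T₀ + 1), c / (1 - ρ) :=
        Finset.sum_le_sum fun r _ =>
          (Finset.sum_le_sum fun τ _ => hf τ).trans (sum_range_mul_pow_le hc hρ0 hρ1 r)
    _ = T * (c / (1 - ρ)) := by
        rw [Finset.sum_const, Nat.card_Ico, nsmul_eq_mul, Nat.add_sub_add_right, Nat.add_sub_cancel]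

end R1Frobenius

section SymmetricBlocks

variable {α β : Type*} [Fintype α] [Fintype β] [DecidableEq α] [DecidableEq β]
  (X : Matrix α α ℝ) (Y : Matrix α β ℝ) {a b : ℝ}

theorem specNorm_fromBlocks_symmetrize_le (ha : 0 ≤ a) (hb : 0 ≤ b) :
    specNorm (fromBlocks (a • (2 : ℝ)⁻¹ • (X + Xᵀ)) (b • Y) (b • Yᵀ) 0) ≤
      a * specNorm X + b * specNorm Y := by
  refine (specNorm_fromBlocks_zero₂₂_le _ _ _).trans ?_
  rw [specNorm_smul a, specNorm_smul b Y, specNorm_smul b Yᵀ, specNorm_transpose, max_self,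
    abs_of_nonneg ha, abs_of_nonneg hb]
  gcongr
  exact specNorm_half_add_transpose_le X

omit [DecidableEq α] [DecidableEq β] in
theorem frobeniusSq_fromBlocks_symmetrize_le :
    frobeniusSq (fromBlocks (a • (2 : ℝ)⁻¹ • (X + Xᵀ)) (b • Y) (b • Yᵀ) 0) ≤
      a ^ 2 * frobeniusSq X + 2 * b ^ 2 * frobeniusSq Y := by
  rw [frobeniusSq_fromBlocks, frobeniusSq_smul a, frobeniusSq_smul b Y, frobeniusSq_smul b Yᵀ,
    frobeniusSq_transpose, frobeniusSq_zero]
  have := mul_le_mul_of_nonneg_left (frobeniusSq_half_add_transpose_le X) (sq_nonneg a)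
  linarith

end SymmetricBlocks

section ClosedLoop

variable {n q : ℕ} {T T₀ : ℕ} {M : ℕ → Matrix (Fin n) (Fin q) ℝ} {C ρ : ℝ}

theorem specNorm_R1_rowEmbed_le (i j : Fin n) (hC : 0 ≤ C) (hρ0 : 0 ≤ ρ) (hρ1 : ρ < 1)
    (hM : ∀ τ, specNorm (M τ) ≤ C * ρ ^ τ) :
    specNorm (R1 T T₀ fun τ => rowEmbed n (M τ) i j) ≤ C / (1 - ρ) :=
  specNorm_R1_le hC hρ0 hρ1 fun τ => (specNorm_rowEmbed_le _ i j).trans (hM τ)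

theorem frobeniusSq_R1_rowEmbed_le (i j : Fin n) (hρ0 : 0 ≤ ρ) (hρ1 : ρ < 1)
    (hM : ∀ τ, specNorm (M τ) ≤ C * ρ ^ τ) :
    frobeniusSq (R1 T T₀ fun τ => rowEmbed n (M τ) i j) ≤ T * (C ^ 2 / (1 - ρ ^ 2)) := by
  refine frobeniusSq_R1_le (sq_nonneg C) (sq_nonneg ρ) (by nlinarith) fun τ => ?_
  calc frobeniusSq (rowEmbed n (M τ) i j) ≤ specNorm (M τ) ^ 2 := frobeniusSq_rowEmbed_le _ i j
    _ ≤ (C * ρ ^ τ) ^ 2 := pow_le_pow_left₀ (specNorm_nonneg _) (hM τ) 2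
    _ = C ^ 2 * (ρ ^ 2) ^ τ := by ring

end ClosedLoop

theorem statement_9_general (n m T T₀ : ℕ)
    (i j : Fin n)
    (A : Matrix (Fin n) (Fin n) ℝ) (B : Matrix (Fin n) (Fin m) ℝ)
    (K : Matrix (Fin m) (Fin n) ℝ) (η C ρ : ℝ)
    (hC : 1 ≤ C) (hρ0 : 0 ≤ ρ) (hρ1 : ρ < 1)
    (hspec1 : ∀ τ : ℕ, specNorm ((A + B * K) ^ τ) ≤ C * ρ ^ τ)
    (hspec2 : ∀ τ : ℕ, specNorm ((A + B * K) ^ τ * B) ≤ C * ρ ^ τ)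
    (RG : Matrix ((Fin (T + T₀ + 1) × Fin n) ⊕ (Fin (T + T₀ + 1) × Fin m))
      ((Fin (T + T₀ + 1) × Fin n) ⊕ (Fin (T + T₀ + 1) × Fin m)) ℝ)
    (hRG : RG = Matrix.fromBlocks
      (η ^ 2 • R1sym T T₀ (fun τ => rowEmbed n ((A + B * K) ^ τ) i j))
      ((η ^ 2 / 2) • R1 T T₀ (fun τ => rowEmbed n ((A + B * K) ^ τ * B) i j))
      ((η ^ 2 / 2) • (R1 T T₀ (fun τ => rowEmbed n ((A + B * K) ^ τ * B) i j))ᵀ)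
      0) :
    (∀ lam ∈ spectrum ℝ RG, |lam| ≤ (3 / 2) * C * η ^ 2 / (1 - ρ)) ∧
    (∀ hH : RG.IsHermitian,
      ∑ idx, hH.eigenvalues idx ^ 2 ≤ (9 / 2) * C ^ 2 * η ^ 4 * (T : ℝ) / (1 - ρ) ^ 2) := by
  have hC0 : 0 ≤ C := by linarith
  rw [R1sym] at hRG
  constructor
  · intro lam hlam
    calc |lam| ≤ specNorm RG := abs_le_specNorm_of_mem_spectrum hlam
      _ ≤ η ^ 2 * (C / (1 - ρ)) + η ^ 2 / 2 * (C / (1 - ρ)) := by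
          rw [hRG]
          refine (specNorm_fromBlocks_symmetrize_le _ _ (by positivity) (by positivity)).trans ?_
          gcongr <;> exact specNorm_R1_rowEmbed_le i j hC0 hρ0 hρ1 ‹_›
      _ = (3 / 2) * C * η ^ 2 / (1 - ρ) := by ring
  · intro hH
    have hgeom : C ^ 2 / (1 - ρ ^ 2) ≤ C ^ 2 / (1 - ρ) ^ 2 :=
      div_le_div_of_nonneg_left (sq_nonneg C) (by nlinarith) (by nlinarith)
    rw [sum_sq_eigenvalues_eq_frobeniusSq, hRG]
    calc _ ≤ (η ^ 2) ^ 2 * (T * (C ^ 2 / (1 - ρ ^ 2)))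
          + 2 * (η ^ 2 / 2) ^ 2 * (T * (C ^ 2 / (1 - ρ ^ 2))) := by
          refine (frobeniusSq_fromBlocks_symmetrize_le _ _).trans ?_
          gcongr <;> exact frobeniusSq_R1_rowEmbed_le i j hρ0 hρ1 ‹_›
      _ ≤ (9 / 2) * (η ^ 4 * T * (C ^ 2 / (1 - ρ) ^ 2)) := by
          have := mul_le_mul_of_nonneg_left hgeom (by positivity : (0 : ℝ) ≤ η ^ 4 * T)
          have : 0 ≤ η ^ 4 * T * (C ^ 2 / (1 - ρ) ^ 2) := by positivity
          linarith
      _ = (9 / 2) * C ^ 2 * η ^ 4 * (T : ℝ) / (1 - ρ) ^ 2 := by ring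

/-- Eigenvalue bounds for the quadratic-form matrix `R_G`:
every eigenvalue satisfies `|λ| ≤ (3/2) Cη²/(1−ρ)` and the eigenvalues' squares sum to at
most `(9/2) C²η⁴ T/(1−ρ)²`. -/
theorem statement_9 (n m T T₀ : ℕ) (hn : 1 ≤ n) (hm : 1 ≤ m) (hT : 1 ≤ T)
    (i j : Fin n)
    (A : Matrix (Fin n) (Fin n) ℝ) (B : Matrix (Fin n) (Fin m) ℝ)
    (K : Matrix (Fin m) (Fin n) ℝ) (η C ρ : ℝ)
    (hη : 0 < η) (hC : 1 ≤ C) (hρ0 : 0 ≤ ρ) (hρ1 : ρ < 1)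
    (hspec1 : ∀ τ : ℕ, specNorm ((A + B * K) ^ τ) ≤ C * ρ ^ τ)
    (hspec2 : ∀ τ : ℕ, specNorm ((A + B * K) ^ τ * B) ≤ C * ρ ^ τ)
    (RG : Matrix ((Fin (T + T₀ + 1) × Fin n) ⊕ (Fin (T + T₀ + 1) × Fin m))
      ((Fin (T + T₀ + 1) × Fin n) ⊕ (Fin (T + T₀ + 1) × Fin m)) ℝ)
    (hRG : RG = Matrix.fromBlocks
      (η ^ 2 • R1sym T T₀ (fun τ => rowEmbed n ((A + B * K) ^ τ) i j))
      ((η ^ 2 / 2) • R1 T T₀ (fun τ => rowEmbed n ((A + B * K) ^ τ * B) i j))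
      ((η ^ 2 / 2) • (R1 T T₀ (fun τ => rowEmbed n ((A + B * K) ^ τ * B) i j))ᵀ)
      0) :
    (∀ lam ∈ spectrum ℝ RG, |lam| ≤ (3 / 2) * C * η ^ 2 / (1 - ρ)) ∧
    (∀ hH : RG.IsHermitian,
      ∑ idx, hH.eigenvalues idx ^ 2 ≤ (9 / 2) * C ^ 2 * η ^ 4 * (T : ℝ) / (1 - ρ) ^ 2) :=
  statement_9_general n m T T₀ i j A B K η C ρ hC hρ0 hρ1 hspec1 hspec2 RG hRG
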